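/- arXiv:2207.02277 — 10 statements merged into one kernel-verified Lean document; each statement's English description precedes it below -/
import Mathlib

section
/- Let A and B be relational structures over a common signature σ, and let k ≥ 1. Then there is a homomorphism from A to B if and only if there is a homomorphism from the k-th tensor power A^⊗k to B^⊗k, where the k-th tensor power of a σ-structure A has domain A^k and, for each relation symbol R of arity r, its relation consists of all tensors a^⊗k for a ∈ R^A, where a^⊗k is the function [r]^k → A^k sending (i₁,…,i_k) to (a_{i₁},…,a_{i_k}). -/
/-- A relational signature: a type of symbols, each with an index type (its arity set). -/
structure Sig where
  symb : Type
  idx : symb → Type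

/-- A relational structure over a signature. -/
structure Str (σ : Sig) where
  dom : Type
  rel : ∀ R : σ.symb, Set (σ.idx R → dom)

/-- Homomorphisms of relational structures. -/
def IsHom {σ : Sig} (A B : Str σ) (f : A.dom → B.dom) : Prop :=
  ∀ (R : σ.symb) (t : σ.idx R → A.dom), t ∈ A.rel R → (fun i => f (t i)) ∈ B.rel R

/-- The tensorised signature: a symbol of arity `r` gets arity `r^k` (index type `ι → idx R`). -/
def tensSig (σ : Sig) (ι : Type) : Sig := ⟨σ.symb, fun R => ι → σ.idx R⟩

/-- The `k`-th tensor power of a structure (with `ι` playing the role of `[k]`):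
domain `A^k`, and relations consisting of the tensors `a^⊗k` for `a ∈ R^A`. -/
def tpow {σ : Sig} (A : Str σ) (ι : Type) : Str (tensSig σ ι) where
  dom := ι → A.dom
  rel R := { T | ∃ a ∈ A.rel R, T = fun i j => a (i j) }

variable {σ : Sig} {A B : Str σ} {ι : Type}

theorem tensor_mem_tpow_rel {R : σ.symb} {t : σ.idx R → A.dom} (ht : t ∈ A.rel R) :
    (fun i j => t (i j)) ∈ (tpow A ι).rel R :=
  ⟨t, ht, rfl⟩

/-- A tensor `b^⊗ι`, evaluated at the constant index tuples, is `b` in every coordinate. -/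
theorem diag_mem_rel_of_mem_tpow_rel {R : σ.symb} {T : (tensSig σ ι).idx R → (tpow B ι).dom}
    (hT : T ∈ (tpow B ι).rel R) (i₀ : ι) : (fun j => T (fun _ => j) i₀) ∈ B.rel R := by
  obtain ⟨b, hb, rfl⟩ := hT
  exact hb

theorem IsHom.map_tpow {f : A.dom → B.dom} (hf : IsHom A B f) :
    IsHom (tpow A ι) (tpow B ι) (fun T i => f (T i)) := by
  rintro R _ ⟨a, ha, rfl⟩
  exact ⟨fun j => f (a j), hf R a ha, rfl⟩

theorem IsHom.of_tpow {g : (tpow A ι).dom → (tpow B ι).dom}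
    (hg : IsHom (tpow A ι) (tpow B ι) g) (i₀ : ι) : IsHom A B (fun a => g (fun _ => a) i₀) :=
  fun R _ ht => diag_mem_rel_of_mem_tpow_rel (hg R _ (tensor_mem_tpow_rel ht)) i₀

/-- `A → B` iff `A^⊗k → B^⊗k`, for `k ≥ 1`. -/
theorem stmt0 {σ : Sig} (A B : Str σ) (k : ℕ) (hk : 1 ≤ k) :
    (∃ f, IsHom A B f) ↔ ∃ g, IsHom (tpow A (Fin k)) (tpow B (Fin k)) g :=
  ⟨fun ⟨_, hf⟩ => ⟨_, IsHom.map_tpow hf⟩, fun ⟨_, hg⟩ => ⟨_, IsHom.of_tpow hg ⟨0, hk⟩⟩⟩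
end

section
/- Let A and B be relational structures over signature σ with A k-enhanced, i.e., σ contains a k-ary symbol R_k interpreted in A as the full relation A^k. Then the map sending a homomorphism f : A → B to the map f* : A^k → B^k defined coordinatewise, f*(a₁,…,a_k) = (f(a₁),…,f(a_k)), is a bijection between Hom(A,B) and Hom(A^⊗k, B^⊗k). -/
/-!
A homomorphism `g : A^⊗k → B^⊗k` sends the tuple `(v ∘ i)ᵢ` of the full `k`-ary relation to a
tuple `(b ∘ i)ᵢ`. Evaluating at `i = id` and at the constant maps `i = const j` gives
`g v j = g (const (v j)) j₀`, so `g` acts coordinatewise through its diagonal `x ↦ g (const x) j₀`,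
which is a homomorphism `A → B` by the same evaluation at constant maps.
-/

def tpowMap {σ : Sig} {A B : Str σ} (ι : Type) (f : A.dom → B.dom) :
    (tpow A ι).dom → (tpow B ι).dom :=
  fun v j => f (v j)

theorem isHom_tpowMap {σ : Sig} {A B : Str σ} (ι : Type) {f : A.dom → B.dom}
    (hf : IsHom A B f) : IsHom (tpow A ι) (tpow B ι) (tpowMap ι f) := by
  rintro R T ⟨a, ha, rfl⟩
  exact ⟨fun i => f (a i), hf R a ha, rfl⟩

theorem tpowMap_injective {σ : Sig} {A B : Str σ} (ι : Type) [Nonempty ι] :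
    Function.Injective (tpowMap (A := A) (B := B) ι) := by
  intro f f' h
  funext x
  exact congrFun (congrFun h fun _ => x) (Classical.arbitrary ι)

theorem IsHom.diagonal {σ : Sig} {A B : Str σ} {ι : Type}
    {g : (tpow A ι).dom → (tpow B ι).dom} (hg : IsHom (tpow A ι) (tpow B ι) g) (j₀ : ι) :
    IsHom A B (fun x => g (fun _ => x) j₀) := by
  intro R t ht
  obtain ⟨b, hb, hgt⟩ := hg R (fun i j => t (i j)) ⟨t, ht, rfl⟩
  convert hb using 1
  funext s
  exact congrFun (congrFun hgt fun _ => s) j₀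

theorem IsHom.eq_tpowMap_diagonal {σ : Sig} {A B : Str σ} {R : σ.symb}
    (hA : A.rel R = Set.univ) {g : (tpow A (σ.idx R)).dom → (tpow B (σ.idx R)).dom}
    (hg : IsHom (tpow A (σ.idx R)) (tpow B (σ.idx R)) g) (j₀ : σ.idx R) :
    g = tpowMap (σ.idx R) (fun x => g (fun _ => x) j₀) := by
  funext v j
  have hv : (fun i j' => v (i j')) ∈ (tpow A (σ.idx R)).rel R := ⟨v, hA ▸ trivial, rfl⟩
  obtain ⟨b, -, hgv⟩ := hg R _ hv
  calc g v j = b j := congrFun (congrFun hgv id) j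
    _ = g (fun _ => v j) j₀ := (congrFun (congrFun hgv fun _ => j) j₀).symm

/-- if `A` is `k`-enhanced (via a `k`-ary symbol `Rk` interpreted as the full
relation), then `f ↦ f*`, where `f*` acts coordinatewise, is a bijection
`Hom(A,B) ≃ Hom(A^⊗k, B^⊗k)`. -/
theorem stmt1 {σ : Sig} (A B : Str σ) (k : ℕ) (hk : 1 ≤ k) (Rk : σ.symb)
    (he : Nonempty (σ.idx Rk ≃ Fin k)) (hA : A.rel Rk = Set.univ) :
    ∃ h : {f : A.dom → B.dom // IsHom A B f} →
        {g : (tpow A (σ.idx Rk)).dom → (tpow B (σ.idx Rk)).dom //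
          IsHom (tpow A (σ.idx Rk)) (tpow B (σ.idx Rk)) g},
      Function.Bijective h ∧ ∀ f, (h f).1 = fun v j => f.1 (v j) := by
  obtain ⟨e⟩ := he
  let j₀ : σ.idx Rk := e.symm ⟨0, hk⟩
  have : Nonempty (σ.idx Rk) := ⟨j₀⟩
  refine ⟨fun f => ⟨tpowMap _ f.1, isHom_tpowMap _ f.2⟩, ⟨?_, ?_⟩, fun f => rfl⟩
  · intro f f' h
    exact Subtype.ext (tpowMap_injective _ (congrArg Subtype.val h))
  · rintro ⟨g, hg⟩
    exact ⟨⟨_, hg.diagonal j₀⟩, Subtype.ext (hg.eq_tpowMap_diagonal hA j₀).symm⟩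
end

section
/- The collection S, where S^(L) is the set of real L × ℕ matrices M with finitely many nonzero columns, M Mᵀ diagonal, and trace(M Mᵀ) = 1, equipped with minor operations M_{/π} = P M for π : [L] → [L'] (where P is the L'×L 0/1 matrix with P_{i,j} = 1 iff π(j) = i), is a minion: M_{/id} = M and (M_{/π})_{/π'} = M_{/π'∘π}, and each minor operation maps S^(L) into S^(L'). -/
/-- The minor operation `M_{/π} = P M`, where `P` is the `L'×L` 0/1 matrix with
`P_{i,j} = 1` iff `π(j) = i`: the `i`-th row of `P M` is the sum of the rows of `M`
indexed by the preimage `π⁻¹(i)`. -/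
def minorS {L L' : ℕ} (π : Fin L → Fin L') (M : Fin L → ℕ → ℝ) : Fin L' → ℕ → ℝ :=
  fun i j => ∑ i' : Fin L, if π i' = i then M i' j else 0

/-- The SDP minion: real `L × ℕ` matrices with finitely many nonzero columns,
`M Mᵀ` diagonal (distinct rows orthogonal), and `trace (M Mᵀ) = 1`. -/
def Sminion (L : ℕ) : Set (Fin L → ℕ → ℝ) :=
  { M | {j | ∃ i, M i j ≠ 0}.Finite ∧
        (∀ i i' : Fin L, i ≠ i' → (∑ᶠ j : ℕ, M i j * M i' j) = 0) ∧
        (∑ i : Fin L, ∑ᶠ j : ℕ, M i j * M i j) = 1 }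

/-!
Writing `M_{/π} = P_π M`, the identity and composition laws are `P_id = 1` and
`P_{π'} P_π = P_{π' ∘ π}`. For closure, the inner product of rows `i, i'` of `P_π M` is the sum
of the inner products of rows `a, b` of `M` over `π a = i`, `π b = i'`. Orthogonality of the rows
of `M` kills every term with `a ≠ b`: distinct fibres give orthogonal rows, and the trace becomes
`∑ a, ⟨M a, M a⟩ = 1` regrouped along the fibres of `π`.
-/

open Finset

section MinorMatrix

variable (R : Type*) [Semiring R] {ι κ ν : Type*}

def minorMatrix [DecidableEq κ] (π : ι → κ) : Matrix κ ι R :=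
  Matrix.of fun i a => if π a = i then 1 else 0

lemma minorMatrix_id [DecidableEq ι] : minorMatrix R (id : ι → ι) = 1 := by
  ext i a
  simp [minorMatrix, Matrix.one_apply, eq_comm]

lemma minorMatrix_mul_minorMatrix [Fintype κ] [DecidableEq κ] [DecidableEq ν]
    (π : ι → κ) (π' : κ → ν) :
    minorMatrix R π' * minorMatrix R π = minorMatrix R (π' ∘ π) := by
  ext i a
  simp [minorMatrix, Matrix.mul_apply]

end MinorMatrix

lemma of_minorS {L L' : ℕ} (π : Fin L → Fin L') (M : Fin L → ℕ → ℝ) :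
    Matrix.of (minorS π M) = minorMatrix ℝ π * Matrix.of M := by
  ext i j
  simp [minorS, minorMatrix, Matrix.mul_apply]

lemma minorS_id {L : ℕ} (M : Fin L → ℕ → ℝ) : minorS id M = M :=
  Matrix.of.injective <| by rw [of_minorS, minorMatrix_id, Matrix.one_mul]

lemma minorS_minorS {L L' L'' : ℕ} (π : Fin L → Fin L') (π' : Fin L' → Fin L'')
    (M : Fin L → ℕ → ℝ) : minorS π' (minorS π M) = minorS (π' ∘ π) M :=
  Matrix.of.injective <| by
    rw [of_minorS, of_minorS, of_minorS, ← Matrix.mul_assoc, minorMatrix_mul_minorMatrix]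

lemma finsum_sum_mul_sum {ι α R : Type*} [CommSemiring R] {f : ι → α → R}
    (hf : ∀ i, (f i).HasFiniteSupport) (s t : Finset ι) :
    ∑ᶠ x, (∑ i ∈ s, f i x) * (∑ k ∈ t, f k x) = ∑ i ∈ s, ∑ k ∈ t, ∑ᶠ x, f i x * f k x := by
  simp_rw [Finset.sum_mul]
  rw [finsum_sum_comm s (fun x i => f i x * ∑ k ∈ t, f k x) fun i _ => (hf i).mul_left _]
  refine sum_congr rfl fun i _ => ?_
  simp_rw [Finset.mul_sum]
  exact finsum_sum_comm t (fun x k => f i x * f k x) fun k _ => (hf i).mul_left _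

lemma minorS_apply {L L' : ℕ} (π : Fin L → Fin L') (M : Fin L → ℕ → ℝ) (i : Fin L') (j : ℕ) :
    minorS π M i j = ∑ a with π a = i, M a j :=
  (sum_filter _ _).symm

lemma finsum_minorS_mul_minorS {L L' : ℕ} (π : Fin L → Fin L') {M : Fin L → ℕ → ℝ}
    (hM : ∀ a, (M a).HasFiniteSupport) (i i' : Fin L') :
    ∑ᶠ j, minorS π M i j * minorS π M i' j =
      ∑ a with π a = i, ∑ b with π b = i', ∑ᶠ j, M a j * M b j := by
  simp only [minorS_apply]
  exact finsum_sum_mul_sum hM _ _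

lemma minorS_mem_Sminion {L L' : ℕ} (π : Fin L → Fin L') {M : Fin L → ℕ → ℝ}
    (hM : M ∈ Sminion L) : minorS π M ∈ Sminion L' := by
  obtain ⟨hfin, horth, htrace⟩ := hM
  have hrow : ∀ a, (M a).HasFiniteSupport := fun a => hfin.subset fun j hj => ⟨a, hj⟩
  refine ⟨hfin.subset ?_, fun i i' hii' => ?_, ?_⟩
  · rintro j ⟨i, hi⟩
    rw [minorS_apply] at hi
    obtain ⟨a, -, ha⟩ := exists_ne_zero_of_sum_ne_zero hi
    exact ⟨a, ha⟩
  · rw [finsum_minorS_mul_minorS π hrow]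
    refine sum_eq_zero fun a ha => sum_eq_zero fun b hb => horth a b ?_
    rintro rfl
    exact hii' ((mem_filter.1 ha).2.symm.trans (mem_filter.1 hb).2)
  · calc ∑ i, ∑ᶠ j, minorS π M i j * minorS π M i j
        = ∑ i, ∑ a with π a = i, ∑ᶠ j, M a j * M a j := by
          refine sum_congr rfl fun i _ => ?_
          rw [finsum_minorS_mul_minorS π hrow]
          exact sum_congr rfl fun a ha =>
            sum_eq_single_of_mem a ha fun b _ hba => horth a b hba.symm
      _ = ∑ a, ∑ᶠ j, M a j * M a j := sum_fiberwise univ π _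
      _ = 1 := htrace

lemma single_mem_Sminion {L : ℕ} (i₀ : Fin L) :
    Pi.single i₀ (Pi.single 0 1) ∈ Sminion L := by
  refine ⟨(Set.finite_singleton 0).subset ?_, fun i i' hii' => ?_, ?_⟩
  · rintro j ⟨i, hi⟩
    by_contra hj
    rcases eq_or_ne i i₀ with rfl | _ <;> simp_all
  · rcases eq_or_ne i i₀ with rfl | _ <;> simp_all
  · rw [Fintype.sum_eq_single i₀ fun i hi => by simp [hi],
      finsum_eq_single _ 0 fun j hj => by simp [hj]]
    simp

/-- `S` is a minion: each `S^(L)` (for `L ≥ 1`) is nonempty, the minor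
operations map `S^(L)` into `S^(L')`, and they satisfy the identity and composition laws. -/
theorem stmt2 :
    (∀ L : ℕ, 1 ≤ L → (Sminion L).Nonempty) ∧
    (∀ (L L' : ℕ) (π : Fin L → Fin L') (M : Fin L → ℕ → ℝ),
      M ∈ Sminion L → minorS π M ∈ Sminion L') ∧
    (∀ (L : ℕ) (M : Fin L → ℕ → ℝ), minorS id M = M) ∧
    (∀ (L L' L'' : ℕ) (π : Fin L → Fin L') (π' : Fin L' → Fin L'') (M : Fin L → ℕ → ℝ),
      minorS π' (minorS π M) = minorS (π' ∘ π) M) :=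
  ⟨fun _ hL => ⟨_, single_mem_Sminion ⟨0, hL⟩⟩, fun _ _ π _ => minorS_mem_Sminion π,
    fun _ => minorS_id, fun _ _ _ => minorS_minorS⟩
end

section
/- For any minion M, any k ≥ 1, and any k-enhanced σ-structures X, A: if there is a homomorphism X → A, then there is a homomorphism X^⊗k → F_M(A^⊗k). That is, the k-th level of the minion test is complete. -/
/-- An (abstract) minion: arity-indexed families of nonempty sets with minor operations
satisfying the identity and composition laws. -/
structure Minion where
  elem : Type → Type
  nonempty : ∀ I : Type, Nonempty (elem I)
  minor : ∀ {I J : Type}, (I → J) → elem I → elem J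
  minor_id : ∀ {I : Type} (M : elem I), minor id M = M
  minor_comp : ∀ {I J K : Type} (π : I → J) (π' : J → K) (M : elem I),
    minor π' (minor π M) = minor (π' ∘ π) M

/-- The free structure `F_𝕄(A)`: domain `𝕄^(|A|)`; a tuple is in `R^{F_𝕄(A)}` iff it
arises from a common element `Q ∈ 𝕄^(|R^A|)` via the minors along the coordinate
projections `π_i : R^A → A`. -/
def freeStr (𝕄 : Minion) {σ : Sig} (A : Str σ) : Str σ where
  dom := 𝕄.elem A.dom
  rel R := { t | ∃ Q : 𝕄.elem ↥(A.rel R), ∀ i : σ.idx R, t i = 𝕄.minor (fun a => a.1 i) Q }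

/-! Any element `e ∈ 𝕄(I)` maps every structure `B` homomorphically into `F_𝕄(B)` by sending
`b` to the minor of `e` along the constant map to `b`: a tuple `t ∈ R^B` is witnessed by the
minor of `e` along the constant map to `t`. Precomposing with `f^⊗k : X^⊗k → A^⊗k` proves the
theorem. -/

theorem IsHom.comp {σ : Sig} {A B C : Str σ} {g : B.dom → C.dom} {f : A.dom → B.dom}
    (hg : IsHom B C g) (hf : IsHom A B f) : IsHom A C (g ∘ f) :=
  fun R t ht => hg R _ (hf R t ht)

theorem IsHom.tpow {σ : Sig} {A B : Str σ} {f : A.dom → B.dom} (hf : IsHom A B f)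
    (ι : Type) : IsHom (tpow A ι) (tpow B ι) (fun v i => f (v i)) := by
  rintro R _ ⟨a, ha, rfl⟩
  exact ⟨fun j => f (a j), hf R a ha, rfl⟩

theorem isHom_freeStr_minor_const (𝕄 : Minion) {σ : Sig} (B : Str σ) {I : Type}
    (e : 𝕄.elem I) : IsHom B (freeStr 𝕄 B) (fun b => 𝕄.minor (fun _ => b) e) := by
  intro R t ht
  refine ⟨𝕄.minor (fun _ => ⟨t, ht⟩) e, fun i => ?_⟩
  rw [𝕄.minor_comp]
  rfl

theorem stmt8_general (𝕄 : Minion) {σ : Sig} (X A : Str σ)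
    (Rk : σ.symb)
    (f : X.dom → A.dom) (hf : IsHom X A f) :
    ∃ g, IsHom (tpow X (σ.idx Rk)) (freeStr 𝕄 (tpow A (σ.idx Rk))) g := by
  obtain ⟨e⟩ := 𝕄.nonempty Unit
  exact ⟨_, (isHom_freeStr_minor_const 𝕄 _ e).comp (hf.tpow _)⟩

/-- the `k`-th level of the minion test is complete: for any minion `𝕄`
and `k`-enhanced structures `X`, `A` (via a common `k`-ary symbol `Rk` interpreted as
the full relation), if `X → A` then `X^⊗k → F_𝕄(A^⊗k)`. -/
theorem stmt8 (𝕄 : Minion) {σ : Sig} (k : ℕ) (hk : 1 ≤ k) (X A : Str σ)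
    (Rk : σ.symb) (he : Nonempty (σ.idx Rk ≃ Fin k))
    (hX : X.rel Rk = Set.univ) (hA : A.rel Rk = Set.univ)
    (f : X.dom → A.dom) (hf : IsHom X A f) :
    ∃ g, IsHom (tpow X (σ.idx Rk)) (freeStr 𝕄 (tpow A (σ.idx Rk))) g :=
  stmt8_general 𝕄 X A Rk f hf
end

section
/- Let M be a minion, k > p ≥ 1 integers, and X, A two σ-structures that are both k-enhanced and p-enhanced. If there is a homomorphism X^⊗k → F_M(A^⊗k), then there is a homomorphism X^⊗p → F_M(A^⊗p). Explicitly, choosing v ∈ [k]^p and w ∈ [p]^k with w∘v = id on [p], the map x ↦ ξ(x_w)_{/τ}, where τ : A^k → A^p sends a to a_v, is such a homomorphism. -/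
theorem mem_tpow_rel_reindex {σ : Sig} (A : Str σ) {ι κ : Type} {v : ι → κ} {w : κ → ι}
    (hwv : w ∘ v = id) {R : σ.symb} {T : (κ → σ.idx R) → κ → A.dom}
    (hT : T ∈ (tpow A κ).rel R) :
    (fun (i : ι → σ.idx R) (j : ι) => T (i ∘ w) (v j)) ∈ (tpow A ι).rel R := by
  obtain ⟨a, ha, rfl⟩ := hT
  refine ⟨a, ha, ?_⟩
  funext i j
  show a (i (w (v j))) = a (i j)
  rw [show w (v j) = j from congrFun hwv j]

/-- The witness of a tuple of `F_𝕄(A^⊗ι)` is the minor of the witness `Q` of the corresponding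
tuple of `F_𝕄(A^⊗κ)` along the reindexing of `mem_tpow_rel_reindex`. -/
theorem isHom_tpow_of_retraction (𝕄 : Minion) {σ : Sig} (X A : Str σ) {ι κ : Type}
    (v : ι → κ) (w : κ → ι) (hwv : w ∘ v = id)
    (ξ : (tpow X κ).dom → (freeStr 𝕄 (tpow A κ)).dom)
    (hξ : IsHom (tpow X κ) (freeStr 𝕄 (tpow A κ)) ξ) :
    IsHom (tpow X ι) (freeStr 𝕄 (tpow A ι))
      (fun x => 𝕄.minor (fun a => a ∘ v) (ξ (x ∘ w))) := by
  rintro R _ ⟨x, hx, rfl⟩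
  obtain ⟨Q, hQ⟩ := hξ R (fun i j => x (i j)) ⟨x, hx, rfl⟩
  let τ : (tpow A κ).rel R → (tpow A ι).rel R := fun T => ⟨_, mem_tpow_rel_reindex A hwv T.2⟩
  refine ⟨𝕄.minor τ Q, fun i => ?_⟩
  exact (congrArg _ (hQ (i ∘ w))).trans
    ((𝕄.minor_comp _ _ Q).trans (𝕄.minor_comp τ (fun T => T.1 i) Q).symm)

theorem exists_comp_eq_id_of_card_le {ι κ : Type} {p k : ℕ} (hp : 1 ≤ p) (hpk : p ≤ k)
    (e : κ ≃ Fin k) (f : ι ≃ Fin p) :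
    ∃ (v : ι → κ) (w : κ → ι), w ∘ v = id := by
  have : Nonempty ι := ⟨f.symm ⟨0, hp⟩⟩
  let v : ι → κ := e.symm ∘ Fin.castLE hpk ∘ f
  have hv : v.Injective :=
    e.symm.injective.comp ((Fin.castLE_injective hpk).comp f.injective)
  exact ⟨v, Function.invFun v, funext (Function.leftInverse_invFun hv)⟩

theorem stmt9_general (𝕄 : Minion) {σ : Sig} (k p : ℕ) (hp : 1 ≤ p) (hkp : p < k)
    (X A : Str σ) (Rk Rp : σ.symb)
    (hek : Nonempty (σ.idx Rk ≃ Fin k)) (hep : Nonempty (σ.idx Rp ≃ Fin p))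
    (ξ : (tpow X (σ.idx Rk)).dom → (freeStr 𝕄 (tpow A (σ.idx Rk))).dom)
    (hξ : IsHom (tpow X (σ.idx Rk)) (freeStr 𝕄 (tpow A (σ.idx Rk))) ξ) :
    (∃ ζ, IsHom (tpow X (σ.idx Rp)) (freeStr 𝕄 (tpow A (σ.idx Rp))) ζ) ∧
    ∀ (v : σ.idx Rp → σ.idx Rk) (w : σ.idx Rk → σ.idx Rp), w ∘ v = id →
      IsHom (tpow X (σ.idx Rp)) (freeStr 𝕄 (tpow A (σ.idx Rp)))
        (fun x => 𝕄.minor (fun a => a ∘ v) (ξ (x ∘ w))) := by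
  obtain ⟨e⟩ := hek
  obtain ⟨f⟩ := hep
  obtain ⟨v, w, hwv⟩ := exists_comp_eq_id_of_card_le hp hkp.le e f
  exact ⟨⟨_, isHom_tpow_of_retraction 𝕄 X A v w hwv ξ hξ⟩,
    fun v w hwv => isHom_tpow_of_retraction 𝕄 X A v w hwv ξ hξ⟩

/-- lower levels of a hierarchy of minion tests are weaker: if `X`, `A`
are both `k`- and `p`-enhanced (`k > p ≥ 1`) and `X^⊗k → F_𝕄(A^⊗k)` via `ξ`, then
`X^⊗p → F_𝕄(A^⊗p)`; explicitly, for any `v ∈ [k]^p`, `w ∈ [p]^k` with `w ∘ v = id`,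
the map `x ↦ ξ(x_w)_{/τ}` with `τ : a ↦ a_v` is such a homomorphism. -/
theorem stmt9 (𝕄 : Minion) {σ : Sig} (k p : ℕ) (hp : 1 ≤ p) (hkp : p < k)
    (X A : Str σ) (Rk Rp : σ.symb)
    (hek : Nonempty (σ.idx Rk ≃ Fin k)) (hep : Nonempty (σ.idx Rp ≃ Fin p))
    (hXk : X.rel Rk = Set.univ) (hAk : A.rel Rk = Set.univ)
    (hXp : X.rel Rp = Set.univ) (hAp : A.rel Rp = Set.univ)
    (ξ : (tpow X (σ.idx Rk)).dom → (freeStr 𝕄 (tpow A (σ.idx Rk))).dom)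
    (hξ : IsHom (tpow X (σ.idx Rk)) (freeStr 𝕄 (tpow A (σ.idx Rk))) ξ) :
    (∃ ζ, IsHom (tpow X (σ.idx Rp)) (freeStr 𝕄 (tpow A (σ.idx Rp))) ζ) ∧
    ∀ (v : σ.idx Rp → σ.idx Rk) (w : σ.idx Rk → σ.idx Rp), w ∘ v = id →
      IsHom (tpow X (σ.idx Rp)) (freeStr 𝕄 (tpow A (σ.idx Rp)))
        (fun x => 𝕄.minor (fun a => a ∘ v) (ξ (x ∘ w))) :=
  stmt9_general 𝕄 k p hp hkp X A Rk Rp hek hep ξ hξ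
end

section
/- Let M be a linear minion over a semiring S of depth d, k ≥ 1, A a σ-structure, R ∈ σ of arity r, and suppose (M_i)_{i ∈ [r]^k} ∈ R^{F_M(A^⊗k)}, i.e., there is Q ∈ M^(|R^A|) with M_i = P_i Q for all i ∈ [r]^k. Then for any i ∈ [r]^k and a ∈ A^k with i ⊀ a (there exist α, β with i_α = i_β but a_α ≠ a_β), the a-th row of M_i is the zero vector of S^d. -/
/-- Left multiplication of a matrix `M : I × d → S` by the 0/1 matrix of `π : I → J`:
the `j`-th row of the result is the sum of the rows of `M` over the preimage `π⁻¹(j)`. -/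
noncomputable def pushMatrix {S : Type} [Semiring S] {I J d : Type}
    (π : I → J) (M : I → d → S) : J → d → S :=
  fun j c => ∑ᶠ (i : I) (_ : π i = j), M i c

/-- A linear minion over a semiring `S` with columns indexed by the depth type `d`:
a family of sets of `I × d` matrices, nonempty for nonempty finite `I`, closed under
the minor operations `M ↦ P M`. -/
structure LinMinion (S : Type) [Semiring S] (d : Type) where
  elem : ∀ I : Type, Set (I → d → S)
  nonempty : ∀ I : Type, Nonempty I → Finite I → (elem I).Nonempty
  minor_mem : ∀ {I J : Type}, Finite I → ∀ (π : I → J) (M : I → d → S),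
    M ∈ elem I → pushMatrix π M ∈ elem J

/-- The free structure of a linear minion generated by a structure `A`:
domain `𝕄^(|A|)`, and a tuple `t` is in `R^{F_𝕄(A)}` iff there is `Q ∈ 𝕄^(|R^A|)`
with `t i = P_i Q` for each coordinate `i`, where `P_i` has `(a,b)`-entry `1` iff `b_i = a`. -/
noncomputable def LinFree {S : Type} [Semiring S] {d : Type} (𝕄 : LinMinion S d)
    {σ : Sig} (A : Str σ) : Str σ where
  dom := { M : A.dom → d → S // M ∈ 𝕄.elem A.dom }
  rel R := { t | ∃ Q : ↥(A.rel R) → d → S, Q ∈ 𝕄.elem ↥(A.rel R) ∧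
      ∀ i : σ.idx R, (t i).1 = fun a c => ∑ᶠ (b : ↥(A.rel R)) (_ : b.1 i = a), Q b c }

/-- Conicity for a family of matrix sets: every element (over a nonempty finite index
type) is nonzero, and any subset of its rows summing to zero consists of zero rows. -/
def ConicFam {S : Type} [Semiring S] {d : Type} (E : ∀ I : Type, Set (I → d → S)) : Prop :=
  ∀ I : Type, Finite I → Nonempty I → ∀ M ∈ E I,
    M ≠ 0 ∧ ∀ V : Set I, (∑ᶠ i ∈ V, M i) = 0 → ∀ i ∈ V, M i = 0

/-- The relation `s ≺ t` of the paper. -/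
def Prec {ι X Y : Type*} (s : ι → X) (t : ι → Y) : Prop :=
  ∀ α β, s α = s β → t α = t β

theorem prec_comp {ι X Y : Type*} (s : ι → X) (f : X → Y) : Prec s (f ∘ s) :=
  fun _ _ h => congrArg f h

/-- Row `a` of `P_i Q` sums the rows `b` of `Q` with `b ∘ i = a`, and there are none unless `i ≺ a`. -/
theorem stmt11_general {S d : Type} [Semiring S] {σ : Sig}
    {k : ℕ} (A : Str σ) (R : σ.symb)
    (M : (Fin k → σ.idx R) → (Fin k → A.dom) → d → S)
    (Q : ↥(A.rel R) → d → S)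
    (hMQ : ∀ (i : Fin k → σ.idx R) (a : Fin k → A.dom) (c : d),
      M i a c = ∑ᶠ (b : ↥(A.rel R)) (_ : (fun j => b.1 (i j)) = a), Q b c) :
    ∀ (i : Fin k → σ.idx R) (a : Fin k → A.dom),
      (¬ ∀ α β : Fin k, i α = i β → a α = a β) → M i a = 0 := by
  intro i a hia
  have no_row : ∀ b : ↥(A.rel R), (fun j => b.1 (i j)) ≠ a :=
    fun b hb => hia (hb ▸ prec_comp i b.1)
  funext c
  simp only [hMQ, no_row, finsum_false, finsum_zero, Pi.zero_apply]

/-- if `(M_i)_{i ∈ [r]^k} ∈ R^{F_𝕄(A^⊗k)}` via a witness `Q ∈ 𝕄^(|R^A|)`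
(i.e. `M_i = P_i Q` for all `i`), then for any `i ∈ [r]^k` and `a ∈ A^k` with `i ⊀ a`,
the `a`-th row of `M_i` is zero. -/
theorem stmt11 {S d : Type} [Semiring S] {σ : Sig} (𝕄 : LinMinion S d)
    {k : ℕ} (hk : 1 ≤ k) (A : Str σ) [Finite A.dom] (R : σ.symb)
    (M : (Fin k → σ.idx R) → (Fin k → A.dom) → d → S)
    (Q : ↥(A.rel R) → d → S) (hQ : Q ∈ 𝕄.elem ↥(A.rel R))
    (hMQ : ∀ (i : Fin k → σ.idx R) (a : Fin k → A.dom) (c : d),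
      M i a c = ∑ᶠ (b : ↥(A.rel R)) (_ : (fun j => b.1 (i j)) = a), Q b c) :
    ∀ (i : Fin k → σ.idx R) (a : Fin k → A.dom),
      (¬ ∀ α β : Fin k, i α = i β → a α = a β) → M i a = 0 :=
  stmt11_general A R M Q hMQ
end

section
/- Let M be a linear minion of depth d over a semiring, k ≥ 1, and X, A k-enhanced σ-structures. If ξ : X^⊗k → F_M(A^⊗k) is a homomorphism, then for any x ∈ X^k and a ∈ A^k with x ⊀ a, the a-th row of ξ(x) is the zero vector of length d. -/
/-!
Apply `ξ` to the tuple `(x ∘ f)_f` of `R_k^{X^⊗k}`, indexed by all maps `f : [k] → [k]`: it yields a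
single matrix `Q` with `ξ (x ∘ f) = P_f Q` for every `f`. For the map `g` collapsing `β` onto `α`
we have `x ∘ g = x` since `x_α = x_β`, while every `b ∈ R_k^{A^⊗k}` has `(b g)_α = (b g)_β`;
as `a_α ≠ a_β`, the `a`-th row of `P_g Q` is an empty sum.
-/

theorem mem_tpow_rel_comp {σ : Sig} (X : Str σ) (ι : Type) {R : σ.symb} {x : σ.idx R → X.dom}
    (hx : x ∈ X.rel R) :
    (fun f : ι → σ.idx R => fun j => x (f j)) ∈ (tpow X ι).rel R :=
  ⟨x, hx, rfl⟩

theorem tpow_rel_apply_eq_of_eq {σ : Sig} {A : Str σ} {ι : Type} {R : σ.symb}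
    {b : (ι → σ.idx R) → ι → A.dom} (hb : b ∈ (tpow A ι).rel R) {f : ι → σ.idx R} {j₁ j₂ : ι}
    (hf : f j₁ = f j₂) : b f j₁ = b f j₂ := by
  obtain ⟨a, -, rfl⟩ := hb
  exact congrArg a hf

theorem LinFree.rel_apply_eq_zero {S d : Type} [Semiring S] {𝕄 : LinMinion S d} {σ : Sig}
    {B : Str σ} {R : σ.symb} {t : σ.idx R → (LinFree 𝕄 B).dom} (ht : t ∈ (LinFree 𝕄 B).rel R)
    (i : σ.idx R) {a : B.dom} (ha : ∀ b ∈ B.rel R, b i ≠ a) : (t i).1 a = 0 := by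
  obtain ⟨Q, -, hQ⟩ := ht
  rw [hQ i]
  funext c
  refine finsum_eq_zero_of_forall_eq_zero fun b => ?_
  have : IsEmpty (b.1 i = a) := ⟨ha b.1 b.2⟩
  exact finsum_of_isEmpty _

theorem stmt12_general {S d : Type} [Semiring S] {σ : Sig} (𝕄 : LinMinion S d)
    (X A : Str σ)
    (Rk : σ.symb)
    (hX : X.rel Rk = Set.univ)
    (ξ : (tpow X (σ.idx Rk)).dom → (LinFree 𝕄 (tpow A (σ.idx Rk))).dom)
    (hξ : IsHom (tpow X (σ.idx Rk)) (LinFree 𝕄 (tpow A (σ.idx Rk))) ξ) :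
    ∀ (x : σ.idx Rk → X.dom) (a : σ.idx Rk → A.dom),
      (¬ ∀ α β : σ.idx Rk, x α = x β → a α = a β) → (ξ x).1 a = 0 := by
  classical
  intro x a hxa
  simp only [not_forall] at hxa
  obtain ⟨α, β, hxαβ, haαβ⟩ := hxa
  set g : σ.idx Rk → σ.idx Rk := Function.update id β α
  have hgαβ : g α = g β := by by_cases h : α = β <;> simp [g, h]
  have hxg : (fun j => x (g j)) = x := by
    funext j
    by_cases h : j = β <;> simp [g, h, hxαβ]
  have hrow := LinFree.rel_apply_eq_zero
    (hξ Rk _ (mem_tpow_rel_comp X (σ.idx Rk) (hX ▸ Set.mem_univ x))) g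
    (a := a) fun b hb hba => haαβ (hba ▸ tpow_rel_apply_eq_of_eq hb hgαβ)
  rwa [hxg] at hrow

/-- if `𝕄` is a linear minion, `X`, `A` are `k`-enhanced, and
`ξ : X^⊗k → F_𝕄(A^⊗k)` is a homomorphism, then for any `x ∈ X^k` and `a ∈ A^k`
with `x ⊀ a`, the `a`-th row of `ξ(x)` is zero. -/
theorem stmt12 {S d : Type} [Semiring S] {σ : Sig} (𝕄 : LinMinion S d)
    {k : ℕ} (hk : 1 ≤ k) (X A : Str σ) [Finite X.dom] [Finite A.dom]
    (Rk : σ.symb) (he : Nonempty (σ.idx Rk ≃ Fin k))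
    (hX : X.rel Rk = Set.univ) (hA : A.rel Rk = Set.univ)
    (ξ : (tpow X (σ.idx Rk)).dom → (LinFree 𝕄 (tpow A (σ.idx Rk))).dom)
    (hξ : IsHom (tpow X (σ.idx Rk)) (LinFree 𝕄 (tpow A (σ.idx Rk))) ξ) :
    ∀ (x : σ.idx Rk → X.dom) (a : σ.idx Rk → A.dom),
      (¬ ∀ α β : σ.idx Rk, x α = x β → a α = a β) → (ξ x).1 a = 0 :=
  stmt12_general 𝕄 X A Rk hX ξ hξ
end

section
/- Let M be a linear minion over semiring S, k ≥ 1, X and A two k-enhanced σ-structures, and ξ : X^k → M^(n^k) a map (n = |A|). Then ξ preserves the relation R_k (i.e., (ξ(x_i))_{i∈[k]^k} ∈ R_k^{F_M(A^⊗k)} for all x ∈ X^k) if and only if for every x ∈ X^k and every i ∈ [k]^k, ξ(x_i) = Π_i ξ(x), where Π_i is the A^k × A^k matrix over S with (a, a')-entry equal to 1 if a'_i = a and 0 otherwise. -/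
/-!
Because `R_k` is full in `A`, the map `a ↦ a^⊗k` is a bijection from `A^k` onto `R_k^{A^⊗k}`,
so a witness `Q ∈ 𝕄^(R_k^{A^⊗k})` is the same thing as a matrix `P ∈ 𝕄^(A^k)`, and the witness
condition for the tuple `(ξ(x_i))_i` reads `ξ(x_i) = Π_i P` for all `i`. Taking `i = id` forces
`P = ξ(x)`; conversely `ξ(x)` itself serves as the witness.
-/

section

variable {S d : Type} [Semiring S]

@[simp]
lemma pushMatrix_id {I : Type} (M : I → d → S) : pushMatrix id M = M := by
  funext j c
  exact finsum_mem_singleton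

lemma pushMatrix_eq_comp_equiv {I J K : Type} (e : I ≃ J) (π : J → K) (M : J → d → S) :
    pushMatrix π M = pushMatrix (π ∘ e) (M ∘ e) := by
  funext k c
  exact (finsum_comp_equiv e (f := fun j => ∑ᶠ _ : π j = k, M j c)).symm

lemma pushMatrix_equiv {I J : Type} (e : I ≃ J) (M : I → d → S) :
    pushMatrix e M = M ∘ e.symm := by
  rw [pushMatrix_eq_comp_equiv e.symm, Equiv.self_comp_symm, pushMatrix_id]

lemma LinMinion.comp_equiv_mem (𝕄 : LinMinion S d) {I J : Type} [Finite J] (e : I ≃ J)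
    {M : J → d → S} (hM : M ∈ 𝕄.elem J) : M ∘ e ∈ 𝕄.elem I := by
  simpa [pushMatrix_equiv] using 𝕄.minor_mem ‹_› e.symm M hM

/-- `a ↦ a^⊗k`: the tuples of `R^A` correspond to the tuples of `R^{A^⊗k}`. -/
def tpowRelEquiv {σ : Sig} (A : Str σ) (R : σ.symb) :
    A.rel R ≃ (tpow A (σ.idx R)).rel R where
  toFun a := ⟨fun i j => a.1 (i j), a.1, a.2, rfl⟩
  invFun T := ⟨T.1 id, by obtain ⟨_, ⟨a, ha, rfl⟩⟩ := T; exact ha⟩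
  left_inv _ := rfl
  right_inv := by rintro ⟨_, a, ha, rfl⟩; rfl

lemma mem_linFree_tpow_rel_iff {σ : Sig} (𝕄 : LinMinion S d) {A : Str σ} {R : σ.symb}
    [Finite (σ.idx R)] [Finite A.dom] (hA : A.rel R = Set.univ)
    (t : (σ.idx R → σ.idx R) → (LinFree 𝕄 (tpow A (σ.idx R))).dom) :
    t ∈ (LinFree 𝕄 (tpow A (σ.idx R))).rel R ↔
      ∃ P ∈ 𝕄.elem (σ.idx R → A.dom), ∀ i, (t i).1 = pushMatrix (· ∘ i) P := by
  let e := (Equiv.Set.univ _).symm.trans ((Equiv.setCongr hA.symm).trans (tpowRelEquiv A R))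
  have : Finite ((tpow A (σ.idx R)).rel R) := .of_equiv _ e
  constructor
  · rintro ⟨Q, hQ, hQt⟩
    exact ⟨Q ∘ e, 𝕄.comp_equiv_mem e hQ, fun i => (hQt i).trans (pushMatrix_eq_comp_equiv e _ Q)⟩
  · rintro ⟨P, hP, hPt⟩
    refine ⟨P ∘ e.symm, 𝕄.comp_equiv_mem e.symm hP, fun i => (hPt i).trans ?_⟩
    have h := pushMatrix_eq_comp_equiv e (fun b : (tpow A (σ.idx R)).rel R => b.1 i) (P ∘ e.symm)
    rw [Function.comp_assoc, e.symm_comp_self] at h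
    exact h.symm

end

theorem stmt13_general {S d : Type} [Semiring S] {σ : Sig} (𝕄 : LinMinion S d)
    {k : ℕ} (X A : Str σ) [Finite A.dom]
    (Rk : σ.symb) (he : Nonempty (σ.idx Rk ≃ Fin k))
    (hX : X.rel Rk = Set.univ) (hA : A.rel Rk = Set.univ)
    (ξ : (tpow X (σ.idx Rk)).dom → (LinFree 𝕄 (tpow A (σ.idx Rk))).dom) :
    (∀ T ∈ (tpow X (σ.idx Rk)).rel Rk,
        (fun i => ξ (T i)) ∈ (LinFree 𝕄 (tpow A (σ.idx Rk))).rel Rk)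
      ↔
    (∀ (x : σ.idx Rk → X.dom) (i : σ.idx Rk → σ.idx Rk),
        (ξ (x ∘ i)).1 = fun a c =>
          ∑ᶠ (a' : σ.idx Rk → A.dom) (_ : a' ∘ i = a), (ξ x).1 a' c) := by
  have : Finite (σ.idx Rk) := .of_equiv _ he.some.symm
  constructor
  · intro hpres x
    obtain ⟨P, -, hP⟩ :=
      (mem_linFree_tpow_rel_iff 𝕄 hA _).1 (hpres (fun i => x ∘ i) ⟨x, hX ▸ trivial, rfl⟩)
    have hξx : (ξ x).1 = P := (hP id).trans (pushMatrix_id P)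
    exact hξx ▸ hP
  · rintro hminor _ ⟨x, -, rfl⟩
    exact (mem_linFree_tpow_rel_iff 𝕄 hA _).2 ⟨(ξ x).1, (ξ x).2, hminor x⟩

/-- a map `ξ : X^k → 𝕄^(n^k)` preserves the enhancing relation `R_k`
(i.e. `(ξ(x_i))_{i ∈ [k]^k} ∈ R_k^{F_𝕄(A^⊗k)}` for all `x ∈ X^k`) iff
`ξ(x_i) = Π_i ξ(x)` for all `x ∈ X^k` and `i ∈ [k]^k`, where `Π_i` has
`(a,a')`-entry `1` iff `a'_i = a`. -/
theorem stmt13 {S d : Type} [Semiring S] {σ : Sig} (𝕄 : LinMinion S d)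
    {k : ℕ} (hk : 1 ≤ k) (X A : Str σ) [Finite X.dom] [Finite A.dom] [Nonempty A.dom]
    (Rk : σ.symb) (he : Nonempty (σ.idx Rk ≃ Fin k))
    (hX : X.rel Rk = Set.univ) (hA : A.rel Rk = Set.univ)
    (ξ : (tpow X (σ.idx Rk)).dom → (LinFree 𝕄 (tpow A (σ.idx Rk))).dom) :
    (∀ T ∈ (tpow X (σ.idx Rk)).rel Rk,
        (fun i => ξ (T i)) ∈ (LinFree 𝕄 (tpow A (σ.idx Rk))).rel Rk)
      ↔
    (∀ (x : σ.idx Rk → X.dom) (i : σ.idx Rk → σ.idx Rk),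
        (ξ (x ∘ i)).1 = fun a c =>
          ∑ᶠ (a' : σ.idx Rk → A.dom) (_ : a' ∘ i = a), (ξ x).1 a' c) :=
  stmt13_general 𝕄 X A Rk he hX hA ξ
end

section
/- Let M be a conic minion of depth d over semiring S and N a linear minion of depth d' over the same semiring. Define (M ⋉ N)^(L) to be the set of L × (d+d') matrices [M | N] with M ∈ M^(L), N ∈ N^(L), and such that row i of N is zero whenever row i of M is zero. Then M ⋉ N, with minors given by left multiplication by the 0/1 matrices of functions π, is a conic minion of depth d + d'. -/
/-- The semi-direct product family: block matrices `[M | N]` with `M ∈ 𝕄`, `N ∈ 𝕹`,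
such that every zero row of `M` forces the corresponding row of `N` to be zero. -/
def semidir {S : Type} [Semiring S] {d d' : Type}
    (𝕄 : LinMinion S d) (𝕹 : LinMinion S d') : ∀ I : Type, Set (I → (d ⊕ d') → S) :=
  fun I => { W | ∃ M ∈ 𝕄.elem I, ∃ N ∈ 𝕹.elem I,
    W = (fun i => Sum.elim (M i) (N i)) ∧ ∀ i : I, M i = 0 → N i = 0 }

/-!
Minors of `[M | N]` act blockwise, giving `[P M | P N]`. If row `j` of `P M` vanishes, it is
the sum of the rows of `M` over `π⁻¹(j)`, so conicity of `M` kills each of those rows; hence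
so do the corresponding rows of `N`, and row `j` of `P N` vanishes too. Conicity of `M ⋉ N` is
read off the left block, whose zero rows force zero rows in the right one. For nonemptiness, push any `N` onto a single nonzero row of `M`.
-/

lemma finsum_mem_apply {ι α β : Type*} [AddCommMonoid β] {V : Set ι} (hV : V.Finite)
    (f : ι → α → β) (a : α) : (∑ᶠ i ∈ V, f i) a = ∑ᶠ i ∈ V, f i a := by
  rw [finsum_mem_eq_finite_toFinset_sum _ hV, finsum_mem_eq_finite_toFinset_sum _ hV,
    Finset.sum_apply]

section pushMatrix

variable {S : Type} [Semiring S] {I J d d' : Type}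

lemma pushMatrix_apply_of_finite [Finite I] (π : I → J) (M : I → d → S) (j : J) :
    pushMatrix π M j = ∑ᶠ i ∈ π ⁻¹' {j}, M i := by
  funext c
  rw [finsum_mem_apply (Set.toFinite _)]
  rfl

lemma pushMatrix_apply_eq_zero {π : I → J} {M : I → d → S} {j : J}
    (h : ∀ i, π i = j → M i = 0) : pushMatrix π M j = 0 := by
  funext c
  exact finsum_mem_of_eqOn_zero fun i hi => congrFun (h i hi) c

lemma pushMatrix_apply_eq_zero_of_notMem_range {π : I → J} (M : I → d → S) {j : J}
    (hj : j ∉ Set.range π) : pushMatrix π M j = 0 :=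
  pushMatrix_apply_eq_zero fun i hi => absurd ⟨i, hi⟩ hj

lemma pushMatrix_sumElim (π : I → J) (M : I → d → S) (N : I → d' → S) :
    pushMatrix π (fun i => Sum.elim (M i) (N i)) =
      fun j => Sum.elim (pushMatrix π M j) (pushMatrix π N j) := by
  funext j c
  cases c <;> rfl

end pushMatrix

section semidir

variable {S : Type} [Semiring S] {d d' : Type} {𝕄 : LinMinion S d}

lemma ConicFam.eq_zero_of_pushMatrix_apply_eq_zero (h𝕄 : ConicFam 𝕄.elem) {I J : Type}
    [Finite I] {π : I → J} {M : I → d → S} (hM : M ∈ 𝕄.elem I) {j : J}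
    (hj : pushMatrix π M j = 0) {i : I} (hi : π i = j) : M i = 0 :=
  have : Nonempty I := ⟨i⟩
  (h𝕄 I ‹_› this M hM).2 _ (pushMatrix_apply_of_finite π M j ▸ hj) i hi

variable (𝕹 : LinMinion S d')

lemma semidir_nonempty (h𝕄 : ConicFam 𝕄.elem) (I : Type) [Nonempty I] [Finite I] :
    (semidir 𝕄 𝕹 I).Nonempty := by
  obtain ⟨M, hM⟩ := 𝕄.nonempty I ‹_› ‹_›
  obtain ⟨N, hN⟩ := 𝕹.nonempty I ‹_› ‹_›
  obtain ⟨i₀, hi₀⟩ := Function.ne_iff.mp (h𝕄 I ‹_› ‹_› M hM).1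
  refine ⟨_, M, hM, pushMatrix (fun _ => i₀) N, 𝕹.minor_mem ‹_› _ N hN, rfl, fun i hi => ?_⟩
  refine pushMatrix_apply_eq_zero_of_notMem_range N ?_
  rintro ⟨_, rfl⟩
  exact hi₀ hi

lemma pushMatrix_mem_semidir (h𝕄 : ConicFam 𝕄.elem) {I J : Type} [Finite I] (π : I → J)
    {W : I → (d ⊕ d') → S} (hW : W ∈ semidir 𝕄 𝕹 I) : pushMatrix π W ∈ semidir 𝕄 𝕹 J := by
  obtain ⟨M, hM, N, hN, rfl, hMN⟩ := hW
  rw [pushMatrix_sumElim]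
  exact ⟨_, 𝕄.minor_mem ‹_› π M hM, _, 𝕹.minor_mem ‹_› π N hN, rfl, fun j hj =>
    pushMatrix_apply_eq_zero fun i hi => hMN i (h𝕄.eq_zero_of_pushMatrix_apply_eq_zero hM hj hi)⟩

lemma conicFam_semidir (h𝕄 : ConicFam 𝕄.elem) : ConicFam (semidir 𝕄 𝕹) := by
  intro I _ _ W hW
  obtain ⟨M, hM, N, hN, rfl, hMN⟩ := hW
  obtain ⟨hM0, hMV⟩ := h𝕄 I ‹_› ‹_› M hM
  refine ⟨fun hW0 => hM0 (funext fun i => funext fun a => congrFun (congrFun hW0 i) (.inl a)),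
    fun V hV i hi => ?_⟩
  have hMV0 : ∑ᶠ i ∈ V, M i = 0 := by
    funext a
    have := congrFun hV (.inl a)
    rwa [finsum_mem_apply V.toFinite] at this ⊢
  have hMi : M i = 0 := hMV V hMV0 i hi
  simp only [hMi, hMN i hMi, Sum.elim_zero_zero]

end semidir

/-- if `𝕄` is conic and `𝕹` linear (over the same semiring), then the
semi-direct product `𝕄 ⋉ 𝕹` is a conic (linear) minion of depth `d + d'`:
its arity sets are nonempty, it is closed under the minor operations, and it is conic. -/
theorem stmt14 {S : Type} [Semiring S] {d d' : Type}
    (𝕄 : LinMinion S d) (𝕹 : LinMinion S d') (h𝕄 : ConicFam 𝕄.elem) :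
    (∀ I : Type, Nonempty I → Finite I → (semidir 𝕄 𝕹 I).Nonempty) ∧
    (∀ (I J : Type), Finite I → ∀ (π : I → J) (W : I → (d ⊕ d') → S),
      W ∈ semidir 𝕄 𝕹 I → pushMatrix π W ∈ semidir 𝕄 𝕹 J) ∧
    ConicFam (semidir 𝕄 𝕹) :=
  ⟨fun I _ _ => semidir_nonempty 𝕹 h𝕄 I,
    fun _ _ _ π _ hW => pushMatrix_mem_semidir 𝕹 h𝕄 π hW,
    conicFam_semidir 𝕹 h𝕄⟩
end

section
/- Let M be a conic minion, k ≥ 2, and let X, A be k-enhanced σ-structures with |X| ≤ k. If there exists a homomorphism ξ : X^⊗k → F_M(A^⊗k), then there exists a homomorphism from X to A. Moreover, such a homomorphism can be obtained by choosing any a ∈ A^k with the a-th row of ξ(v) nonzero, where v ∈ X^k enumerates all elements of X (with repetition), and mapping x to the entry of a in a position where v equals x. -/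
section PushMatrix

variable {S : Type} [Semiring S] {I J K d : Type}

theorem finsum_mem_fiber_eq_pushMatrix [Finite I] (π : I → J) (M : I → d → S) (j : J) :
    ∑ᶠ i ∈ {i | π i = j}, M i = pushMatrix π M j := by
  classical
  have := Fintype.ofFinite I
  funext c
  simp [pushMatrix, finsum_eq_if, finsum_eq_sum_of_fintype, Finset.sum_apply, ite_apply]

theorem pushMatrix_comp [Finite I] [Finite J] (π : I → J) (g : J → K) (M : I → d → S) :
    pushMatrix (fun i => g (π i)) M = pushMatrix g (pushMatrix π M) := by
  classical
  have := Fintype.ofFinite I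
  have := Fintype.ofFinite J
  funext k c
  simp only [pushMatrix, finsum_eq_if, finsum_eq_sum_of_fintype]
  rw [← Finset.sum_fiberwise Finset.univ π]
  refine Finset.sum_congr rfl fun j _ => ?_
  rw [Finset.sum_filter]
  by_cases h : g j = k
  · simp only [h, if_true]
    exact Finset.sum_congr rfl fun i _ => by split_ifs <;> simp_all
  · simp only [h, if_false]
    exact Finset.sum_eq_zero fun i _ => by split_ifs <;> simp_all

theorem exists_ne_zero_of_pushMatrix_ne_zero {π : I → J} {M : I → d → S} {j : J}
    (h : pushMatrix π M j ≠ 0) : ∃ i, π i = j ∧ M i ≠ 0 := by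
  by_contra! h0
  refine h (funext fun c => finsum_eq_zero_of_forall_eq_zero fun i => ?_)
  by_cases hi : π i = j <;> simp [hi, h0]

theorem ConicFam.pushMatrix_ne_zero {E : ∀ I : Type, Set (I → d → S)} (hE : ConicFam E)
    [Finite I] {M : I → d → S} (hM : M ∈ E I) (π : I → J) {i : I} (hi : M i ≠ 0) :
    pushMatrix π M (π i) ≠ 0 := by
  rw [← finsum_mem_fiber_eq_pushMatrix]
  exact fun h => hi ((hE I ‹_› ⟨i⟩ M hM).2 _ h i rfl)

end PushMatrix

theorem exists_surjective_of_natCard_le {α β : Type} [Finite α] [Finite β] [Nonempty β]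
    (h : Nat.card β ≤ Nat.card α) : ∃ f : α → β, Function.Surjective f := by
  have := Fintype.ofFinite α
  have := Fintype.ofFinite β
  rw [Nat.card_eq_fintype_card, Nat.card_eq_fintype_card] at h
  exact Function.exists_surjective_iff.2 ⟨inferInstance, Function.Embedding.nonempty_of_card_le h⟩

instance tensSig.finite_idx {σ : Sig} {ι : Type} [Finite ι] {R : σ.symb} [Finite (σ.idx R)] :
    Finite ((tensSig σ ι).idx R) :=
  inferInstanceAs (Finite (ι → σ.idx R))

instance tpow.finite_dom {σ : Sig} {A : Str σ} {ι : Type} [Finite ι] [Finite A.dom] :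
    Finite (tpow A ι).dom :=
  inferInstanceAs (Finite (ι → A.dom))

instance tpow.nonempty_dom {σ : Sig} {A : Str σ} {ι : Type} [Nonempty A.dom] :
    Nonempty (tpow A ι).dom :=
  inferInstanceAs (Nonempty (ι → A.dom))

theorem tpow_rel_apply_comp {σ : Sig} {A : Str σ} {ι : Type} {R : σ.symb}
    {T : (ι → σ.idx R) → ι → A.dom} (hT : T ∈ (tpow A ι).rel R) (i : ι → σ.idx R) (q : ι → ι) :
    T (fun j => i (q j)) = fun j => T i (q j) := by
  obtain ⟨s, -, rfl⟩ := hT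
  rfl

section TensorHom

variable {S d : Type} [Semiring S] {σ : Sig} {𝕄 : LinMinion S d} {X A : Str σ} {ι : Type}
  {ξ : (tpow X ι).dom → (LinFree 𝕄 (tpow A ι)).dom}

theorem exists_pushMatrix_of_isHom_tpow (hξ : IsHom (tpow X ι) (LinFree 𝕄 (tpow A ι)) ξ)
    {R : σ.symb} {t : σ.idx R → X.dom} (ht : t ∈ X.rel R) :
    ∃ Q ∈ 𝕄.elem ((tpow A ι).rel R), ∀ i : ι → σ.idx R,
      (ξ (fun j => t (i j))).1 = pushMatrix (fun b : (tpow A ι).rel R => b.1 i) Q :=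
  hξ R _ ⟨t, ht, rfl⟩

theorem pushMatrix_precomp_of_isHom_tpow [Finite ι] [Finite A.dom]
    (hξ : IsHom (tpow X ι) (LinFree 𝕄 (tpow A ι)) ξ)
    {R : σ.symb} [Finite (σ.idx R)] {t : σ.idx R → X.dom} (ht : t ∈ X.rel R)
    (i : ι → σ.idx R) (q : ι → ι) :
    (ξ (fun j => t (i (q j)))).1 =
      pushMatrix (fun (α : ι → A.dom) j => α (q j)) (ξ (fun j => t (i j))).1 := by
  obtain ⟨Q, -, hQ⟩ := exists_pushMatrix_of_isHom_tpow hξ ht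
  rw [hQ, hQ]
  refine Eq.trans ?_ (pushMatrix_comp _ _ Q)
  congr 1
  funext b
  exact tpow_rel_apply_comp b.2 i q

end TensorHom

section EnhancedTensorHom

variable {S d : Type} [Semiring S] {σ : Sig} {𝕄 : LinMinion S d} {X A : Str σ} {Rk : σ.symb}
  [Finite A.dom]
  {ξ : (tpow X (σ.idx Rk)).dom → (LinFree 𝕄 (tpow A (σ.idx Rk))).dom}

theorem pushMatrix_precomp_of_rel_eq_univ [Finite (σ.idx Rk)]
    (hξ : IsHom (tpow X (σ.idx Rk)) (LinFree 𝕄 (tpow A (σ.idx Rk))) ξ)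
    (hX : X.rel Rk = Set.univ) (w : σ.idx Rk → X.dom) (q : σ.idx Rk → σ.idx Rk) :
    (ξ (fun j => w (q j))).1 = pushMatrix (fun (α : σ.idx Rk → A.dom) j => α (q j)) (ξ w).1 :=
  pushMatrix_precomp_of_isHom_tpow hξ (hX ▸ Set.mem_univ w) id q

theorem eq_of_row_ne_zero_of_eq [Finite (σ.idx Rk)]
    (hξ : IsHom (tpow X (σ.idx Rk)) (LinFree 𝕄 (tpow A (σ.idx Rk))) ξ)
    (hX : X.rel Rk = Set.univ) {w : σ.idx Rk → X.dom} {β : σ.idx Rk → A.dom}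
    (hβ : (ξ w).1 β ≠ 0) {j₁ j₂ : σ.idx Rk} (hw : w j₁ = w j₂) : β j₁ = β j₂ := by
  classical
  set q := Function.update id j₂ j₁
  have hwq : (fun j => w (q j)) = w := funext fun j => by
    by_cases h : j = j₂ <;> simp [q, h, hw]
  rw [← hwq, pushMatrix_precomp_of_rel_eq_univ hξ hX] at hβ
  obtain ⟨α, rfl, -⟩ := exists_ne_zero_of_pushMatrix_ne_zero hβ
  simp [q, Function.update_apply]

theorem row_comp_ne_zero_of_surjective [Finite (σ.idx Rk)] (hconic : ConicFam 𝕄.elem)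
    (hξ : IsHom (tpow X (σ.idx Rk)) (LinFree 𝕄 (tpow A (σ.idx Rk))) ξ)
    (hX : X.rel Rk = Set.univ) {v : σ.idx Rk → X.dom} (hv : Function.Surjective v)
    {a : σ.idx Rk → A.dom} (ha : (ξ v).1 a ≠ 0) {f : X.dom → A.dom} (hf : ∀ j, f (v j) = a j)
    (w : σ.idx Rk → X.dom) : (ξ w).1 (fun j => f (w j)) ≠ 0 := by
  obtain ⟨q, rfl⟩ : ∃ q : σ.idx Rk → σ.idx Rk, (fun j => v (q j)) = w :=
    ⟨fun j => Function.surjInv hv (w j), funext fun j => Function.surjInv_eq hv _⟩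
  rw [pushMatrix_precomp_of_rel_eq_univ hξ hX]
  simp only [hf]
  exact hconic.pushMatrix_ne_zero (ξ v).2 _ ha

theorem eq_of_forall_row_ne_zero [Finite (σ.idx Rk)] [Nontrivial (σ.idx Rk)]
    (hξ : IsHom (tpow X (σ.idx Rk)) (LinFree 𝕄 (tpow A (σ.idx Rk))) ξ)
    (hX : X.rel Rk = Set.univ) {R : σ.symb} {t : σ.idx R → X.dom} {s : σ.idx R → A.dom}
    (hs : ∀ i : σ.idx Rk → σ.idx R, (ξ (fun j => t (i j))).1 (fun j => s (i j)) ≠ 0)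
    {r₁ r₂ : σ.idx R} (ht : t r₁ = t r₂) : s r₁ = s r₂ := by
  classical
  obtain ⟨j₁, j₂, hj⟩ := exists_pair_ne (σ.idx Rk)
  simpa [hj.symm] using eq_of_row_ne_zero_of_eq hξ hX
    (hs fun j => if j = j₁ then r₁ else r₂) (j₁ := j₁) (j₂ := j₂) (by simp [hj.symm, ht])

theorem isHom_of_forall_row_ne_zero [Nontrivial (σ.idx Rk)]
    [∀ R : σ.symb, Finite (σ.idx R)] [∀ R : σ.symb, Nonempty (σ.idx R)]
    (hconic : ConicFam 𝕄.elem)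
    (hξ : IsHom (tpow X (σ.idx Rk)) (LinFree 𝕄 (tpow A (σ.idx Rk))) ξ)
    (hX : X.rel Rk = Set.univ) {v : σ.idx Rk → X.dom} (hv : Function.Surjective v)
    {f : X.dom → A.dom} (hf : ∀ w, (ξ w).1 (fun j => f (w j)) ≠ 0) : IsHom X A f := by
  intro R t ht
  obtain ⟨Q, hQ, hξQ⟩ := exists_pushMatrix_of_isHom_tpow hξ ht
  set i₀ : σ.idx Rk → σ.idx R := fun j => Function.invFun t (v j)
  have hcover : ∀ r, ∃ j, t (i₀ j) = t r := fun r =>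
    (hv (t r)).imp fun j hj => by simp only [i₀, hj, Function.invFun_eq ⟨r, rfl⟩]
  have hrow := hf fun j => t (i₀ j)
  rw [hξQ] at hrow
  obtain ⟨⟨_, s, hs, rfl⟩, hsi₀, hQs⟩ := exists_ne_zero_of_pushMatrix_ne_zero hrow
  have hs_fib : ∀ {r₁ r₂}, t r₁ = t r₂ → s r₁ = s r₂ :=
    eq_of_forall_row_ne_zero hξ hX fun i => by
      rw [hξQ]
      exact hconic.pushMatrix_ne_zero hQ (fun b => b.1 i) hQs
  convert hs using 1
  funext r
  obtain ⟨j, hj⟩ := hcover r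
  calc f (t r) = f (t (i₀ j)) := by rw [hj]
    _ = s (i₀ j) := (congrFun hsi₀ j).symm
    _ = s r := hs_fib hj

end EnhancedTensorHom

/-- conic hierarchies are sound in the limit. If `𝕄` is conic, `k ≥ 2`,
`X`, `A` are `k`-enhanced with `|X| ≤ k`, and there is a homomorphism
`ξ : X^⊗k → F_𝕄(A^⊗k)`, then `X → A`. Moreover, picking any surjective enumeration
`v ∈ X^k` of the elements of `X` and any `a ∈ A^k` whose row of `ξ(v)` is nonzero, any
map `f` with `f(v_j) = a_j` for all `j` is a homomorphism `X → A`. -/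
theorem stmt16 {S d : Type} [Semiring S] {σ : Sig} (𝕄 : LinMinion S d)
    (hconic : ConicFam 𝕄.elem) {k : ℕ} (hk : 2 ≤ k)
    (X A : Str σ) [Finite X.dom] [Nonempty X.dom] [Finite A.dom] [Nonempty A.dom]
    [∀ R : σ.symb, Finite (σ.idx R)] [∀ R : σ.symb, Nonempty (σ.idx R)]
    (Rk : σ.symb) (he : Nonempty (σ.idx Rk ≃ Fin k))
    (hX : X.rel Rk = Set.univ) (hA : A.rel Rk = Set.univ)
    (hcard : Nat.card X.dom ≤ k)
    (ξ : (tpow X (σ.idx Rk)).dom → (LinFree 𝕄 (tpow A (σ.idx Rk))).dom)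
    (hξ : IsHom (tpow X (σ.idx Rk)) (LinFree 𝕄 (tpow A (σ.idx Rk))) ξ) :
    (∃ f : X.dom → A.dom, IsHom X A f) ∧
    ∀ v : σ.idx Rk → X.dom, Function.Surjective v →
      ∀ a : σ.idx Rk → A.dom, (ξ v).1 a ≠ 0 →
        ∀ f : X.dom → A.dom, (∀ j, f (v j) = a j) → IsHom X A f := by
  obtain ⟨e⟩ := he
  have : Nontrivial (σ.idx Rk) :=
    have := Fin.nontrivial_iff_two_le.2 hk
    e.nontrivial
  have hsound : ∀ v : σ.idx Rk → X.dom, Function.Surjective v →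
      ∀ a : σ.idx Rk → A.dom, (ξ v).1 a ≠ 0 →
        ∀ f : X.dom → A.dom, (∀ j, f (v j) = a j) → IsHom X A f :=
    fun v hv a ha f hf => isHom_of_forall_row_ne_zero hconic hξ hX hv
      (row_comp_ne_zero_of_surjective hconic hξ hX hv ha hf)
  refine ⟨?_, hsound⟩
  obtain ⟨v, hv⟩ := exists_surjective_of_natCard_le (α := σ.idx Rk) (β := X.dom)
    (by rwa [Nat.card_congr e, Nat.card_fin])
  obtain ⟨a, ha⟩ := Function.ne_iff.1 (hconic _ inferInstance inferInstance _ (ξ v).2).1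
  exact ⟨_, hsound v hv a ha (fun x => a (Function.surjInv hv x))
    fun j => eq_of_row_ne_zero_of_eq hξ hX ha (Function.surjInv_eq hv (v j))⟩
end
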